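/- arXiv:2311.18431 — 5 statements merged into one kernel-verified Lean document; each statement's English description precedes it below -/
import Mathlib

section
/- Let f : ℝⁿ → ℝ be differentiable and g : ℝⁿ → ℝ ∪ {∞} be proper, lower semicontinuous, and convex. Let γₖ, γₖ₊₁ > 0, define Hₖ = id − γₖ∇f, and suppose xᵏ = prox_{γₖ g}(Hₖ(xᵏ⁻¹)) and xᵏ⁺¹ = prox_{γₖ₊₁ g}(xᵏ − γₖ₊₁∇f(xᵏ)). Then with ρₖ₊₁ = γₖ₊₁/γₖ, one has ‖xᵏ⁺¹ − xᵏ‖² ≤ ρₖ₊₁⟨Hₖ(xᵏ⁻¹) − Hₖ(xᵏ), xᵏ − xᵏ⁺¹⟩ ≤ ρₖ₊₁²‖Hₖ(xᵏ⁻¹) − Hₖ(xᵏ)‖². -/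
open scoped RealInnerProductSpace

noncomputable section

/-- `g` is a proper extended-real-valued function. -/
def EProper {n : ℕ} (g : EuclideanSpace ℝ (Fin n) → EReal) : Prop :=
  (∀ x, g x ≠ ⊥) ∧ ∃ x, g x ≠ ⊤

/-- Convexity for an extended-real-valued function. -/
def EConvexOn {n : ℕ} (g : EuclideanSpace ℝ (Fin n) → EReal) : Prop :=
  ∀ x y : EuclideanSpace ℝ (Fin n), ∀ a b : ℝ, 0 ≤ a → 0 ≤ b → a + b = 1 →
    g (a • x + b • y) ≤ (a : EReal) * g x + (b : EReal) * g y

/-- `p = prox_{γ g}(y)`: `p` minimizes `z ↦ g z + ‖z - y‖² / (2γ)`. -/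
def IsProx {n : ℕ} (g : EuclideanSpace ℝ (Fin n) → EReal) (γ : ℝ)
    (y p : EuclideanSpace ℝ (Fin n)) : Prop :=
  ∀ z, g p + ((1 / (2 * γ) * ‖p - y‖ ^ 2 : ℝ) : EReal)
      ≤ g z + ((1 / (2 * γ) * ‖z - y‖ ^ 2 : ℝ) : EReal)

/-!
The prox step `p = prox_{γ g}(y)` is characterised by the subgradient inclusion
`(y - p) / γ ∈ ∂g(p)`, which follows from comparing `p` with the points `p + t (z - p)` of a
segment and letting `t → 0`. Monotonicity of `∂g` applied to the two consecutive steps gives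
`γₖ ‖xᵏ - xᵏ⁺¹‖² ≤ γₖ₊₁ ⟪Hₖ(xᵏ⁻¹) - Hₖ(xᵏ), xᵏ - xᵏ⁺¹⟫`, because the gradient terms cancel;
the second inequality is then Cauchy–Schwarz.
-/

open Filter Topology

section InnerProductSpace

variable {E : Type*} [NormedAddCommGroup E] [InnerProductSpace ℝ E]

theorem norm_sub_sq_lineMap (p y z : E) (t : ℝ) :
    ‖(1 - t) • p + t • z - y‖ ^ 2
      = ‖p - y‖ ^ 2 + 2 * t * ⟪p - y, z - p⟫ + t ^ 2 * ‖z - p‖ ^ 2 := by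
  rw [show (1 - t) • p + t • z - y = (p - y) + t • (z - p) by module, norm_add_sq_real,
    real_inner_smul_right, norm_smul, mul_pow, Real.norm_eq_abs, sq_abs]
  ring

theorem mul_inner_le_sq_mul_norm_sq_of_norm_sq_le {w d : E} {ρ : ℝ}
    (h : ‖d‖ ^ 2 ≤ ρ * ⟪w, d⟫) : ρ * ⟪w, d⟫ ≤ ρ ^ 2 * ‖w‖ ^ 2 := by
  have hcs : ρ * ⟪w, d⟫ ≤ |ρ| * ‖w‖ * ‖d‖ := by
    calc ρ * ⟪w, d⟫ ≤ |ρ * ⟪w, d⟫| := le_abs_self _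
      _ = |ρ| * |⟪w, d⟫| := abs_mul _ _
      _ ≤ |ρ| * (‖w‖ * ‖d‖) := by gcongr; exact abs_real_inner_le_norm w d
      _ = |ρ| * ‖w‖ * ‖d‖ := by ring
  have hd : ‖d‖ ≤ |ρ| * ‖w‖ := by
    rcases (norm_nonneg d).eq_or_lt with hd0 | hd0
    · rw [← hd0]; positivity
    · exact le_of_mul_le_mul_right (by nlinarith) hd0
  calc ρ * ⟪w, d⟫ ≤ |ρ| * ‖w‖ * ‖d‖ := hcs
    _ ≤ |ρ| * ‖w‖ * (|ρ| * ‖w‖) := by gcongr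
    _ = ρ ^ 2 * ‖w‖ ^ 2 := by rw [← sq_abs ρ]; ring

end InnerProductSpace

theorem le_of_forall_le_add_mul {a b c : ℝ} (h : ∀ t : ℝ, 0 < t → t ≤ 1 → a ≤ b + t * c) :
    a ≤ b := by
  have hlim : Tendsto (fun t : ℝ => b + t * c) (𝓝[>] 0) (𝓝 b) := by
    have : Tendsto (fun t : ℝ => b + t * c) (𝓝 0) (𝓝 (b + 0 * c)) :=
      (continuous_const.add (continuous_id.mul continuous_const)).tendsto 0
    simpa using this.mono_left nhdsWithin_le_nhds
  refine ge_of_tendsto hlim ?_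
  filter_upwards [Ioc_mem_nhdsGT zero_lt_one] with t ht using h t ht.1 ht.2

section Prox

variable {n : ℕ} {g : EuclideanSpace ℝ (Fin n) → EReal}

theorem EConvexOn.le_coe (hgc : EConvexOn g) {x y : EuclideanSpace ℝ (Fin n)} {gx gy a b : ℝ}
    (hx : g x = gx) (hy : g y = gy) (ha : 0 ≤ a) (hb : 0 ≤ b) (hab : a + b = 1) :
    g (a • x + b • y) ≤ ((a * gx + b * gy : ℝ) : EReal) := by
  simpa [hx, hy] using hgc x y a b ha hb hab

theorem IsProx.ne_top (hgp : EProper g) {γ : ℝ} {y p : EuclideanSpace ℝ (Fin n)}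
    (h : IsProx g γ y p) : g p ≠ ⊤ := by
  obtain ⟨-, z, hz⟩ := hgp
  intro hp
  have := h z
  rw [hp, EReal.top_add_of_ne_bot (EReal.coe_ne_bot _), top_le_iff] at this
  exact EReal.add_ne_top hz (EReal.coe_ne_top _) this

theorem IsProx.exists_eq_coe (hgp : EProper g) {γ : ℝ} {y p : EuclideanSpace ℝ (Fin n)}
    (h : IsProx g γ y p) : ∃ gp : ℝ, g p = gp :=
  ⟨(g p).toReal, (EReal.coe_toReal (h.ne_top hgp) (hgp.1 p)).symm⟩

theorem IsProx.le_of_le_coe {γ : ℝ} {y p z : EuclideanSpace ℝ (Fin n)} (h : IsProx g γ y p)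
    {gp r : ℝ} (hp : g p = gp) (hz : g z ≤ r) :
    gp + 1 / (2 * γ) * ‖p - y‖ ^ 2 ≤ r + 1 / (2 * γ) * ‖z - y‖ ^ 2 := by
  have := (h z).trans (add_le_add_left hz _)
  rwa [hp, ← EReal.coe_add, ← EReal.coe_add, EReal.coe_le_coe_iff] at this

/-- Optimality condition of the prox step: `(y - p) / γ` is a subgradient of `g` at `p`. -/
theorem IsProx.mul_sub_le_inner (hgc : EConvexOn g) {γ : ℝ} (hγ : 0 < γ)
    {y p z : EuclideanSpace ℝ (Fin n)} (h : IsProx g γ y p) {gp gz : ℝ}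
    (hp : g p = gp) (hz : g z = gz) :
    γ * (gp - gz) ≤ ⟪y - p, p - z⟫ := by
  refine le_of_forall_le_add_mul (c := ‖z - p‖ ^ 2 / 2) fun t ht ht1 => ?_
  have hseg := h.le_of_le_coe hp (hgc.le_coe hp hz (sub_nonneg.mpr ht1) ht.le (by ring))
  rw [norm_sub_sq_lineMap] at hseg
  have hinner : ⟪y - p, p - z⟫ = ⟪p - y, z - p⟫ := by
    rw [← inner_neg_neg, neg_sub, neg_sub]
  have hdiv : t * (γ * (gp - gz)) ≤ t * (⟪p - y, z - p⟫ + t * (‖z - p‖ ^ 2 / 2)) := by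
    have := mul_le_mul_of_nonneg_left hseg hγ.le
    field_simp at this
    nlinarith
  rw [hinner]
  exact le_of_mul_le_mul_left hdiv ht

theorem IsProx.inner_monotone (hgp : EProper g) (hgc : EConvexOn g) {γ γ' : ℝ}
    (hγ : 0 < γ) (hγ' : 0 < γ') {y p y' p' : EuclideanSpace ℝ (Fin n)}
    (h : IsProx g γ y p) (h' : IsProx g γ' y' p') :
    γ * ⟪y' - p', p - p'⟫ ≤ γ' * ⟪y - p, p - p'⟫ := by
  obtain ⟨gp, hp⟩ := h.exists_eq_coe hgp
  obtain ⟨gp', hp'⟩ := h'.exists_eq_coe hgp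
  have hA := h.mul_sub_le_inner hgc hγ hp hp'
  have hB := h'.mul_sub_le_inner hgc hγ' hp' hp
  rw [← neg_sub p p', inner_neg_right] at hB
  nlinarith [mul_le_mul_of_nonneg_left hA hγ'.le, mul_le_mul_of_nonneg_left hB hγ.le]

end Prox

theorem stmt0_general {n : ℕ} (f : EuclideanSpace ℝ (Fin n) → ℝ)
    (g : EuclideanSpace ℝ (Fin n) → EReal)
    (hgp : EProper g)
    (hgc : EConvexOn g)
    (γk γk1 : ℝ) (hγk : 0 < γk) (hγk1 : 0 < γk1)
    (xkm1 xk xk1 : EuclideanSpace ℝ (Fin n))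
    (H : EuclideanSpace ℝ (Fin n) → EuclideanSpace ℝ (Fin n))
    (hH : H = fun z => z - γk • gradient f z)
    (hxk : IsProx g γk (H xkm1) xk)
    (hxk1 : IsProx g γk1 (xk - γk1 • gradient f xk) xk1)
    (ρ : ℝ) (hρ : ρ = γk1 / γk) :
    ‖xk1 - xk‖ ^ 2 ≤ ρ * ⟪H xkm1 - H xk, xk - xk1⟫ ∧
      ρ * ⟪H xkm1 - H xk, xk - xk1⟫ ≤ ρ ^ 2 * ‖H xkm1 - H xk‖ ^ 2 := by
  have hmono := hxk.inner_monotone hgp hgc hγk hγk1 hxk1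
  have hstep : xk - γk1 • gradient f xk - xk1 = (xk - xk1) - γk1 • gradient f xk := by abel
  have hprev : H xkm1 - xk = (H xkm1 - H xk) - γk • gradient f xk := by
    rw [hH]; module
  rw [hstep, hprev, inner_sub_left (xk - xk1), inner_sub_left (H xkm1 - H xk),
    real_inner_smul_left, real_inner_smul_left, real_inner_self_eq_norm_sq] at hmono
  have hfirst : ‖xk - xk1‖ ^ 2 ≤ ρ * ⟪H xkm1 - H xk, xk - xk1⟫ := by
    rw [hρ, div_mul_eq_mul_div, le_div_iff₀ hγk]
    linarith
  exact ⟨by rwa [norm_sub_rev], mul_inner_le_sq_mul_norm_sq_of_norm_sq_le hfirst⟩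

/-- FNE-like inequality for proximal gradient iterates with time-varying stepsizes. -/
theorem stmt0 {n : ℕ} (f : EuclideanSpace ℝ (Fin n) → ℝ)
    (g : EuclideanSpace ℝ (Fin n) → EReal)
    (hf : Differentiable ℝ f) (hgp : EProper g) (hglsc : LowerSemicontinuous g)
    (hgc : EConvexOn g)
    (γk γk1 : ℝ) (hγk : 0 < γk) (hγk1 : 0 < γk1)
    (xkm1 xk xk1 : EuclideanSpace ℝ (Fin n))
    (H : EuclideanSpace ℝ (Fin n) → EuclideanSpace ℝ (Fin n))
    (hH : H = fun z => z - γk • gradient f z)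
    (hxk : IsProx g γk (H xkm1) xk)
    (hxk1 : IsProx g γk1 (xk - γk1 • gradient f xk) xk1)
    (ρ : ℝ) (hρ : ρ = γk1 / γk) :
    ‖xk1 - xk‖ ^ 2 ≤ ρ * ⟪H xkm1 - H xk, xk - xk1⟫ ∧
      ρ * ⟪H xkm1 - H xk, xk - xk1⟫ ≤ ρ ^ 2 * ‖H xkm1 - H xk‖ ^ 2 :=
  stmt0_general f g hgp hgc γk γk1 hγk hγk1 xkm1 xk xk1 H hH hxk hxk1 ρ hρ
end
end

section
/- Fix ε ∈ (0, 1) and define ϱ₁ = √ε, ϱ_{t+1} = √(ε + ϱ_t), and t_ε = max{t : ϱ₁, …, ϱ_t < 1}. If t_ε > 1, then t_ε ≤ ⌈1/(ε(2 − ε))⌉. -/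
/-- Bound on `t_ε`: with `ϱ₁ = √ε`, `ϱ_{t+1} = √(ε + ϱ_t)` (indexed here from `0`, so
`ϱ_{t+1} = r t`), if `t_ε > 1` and `ϱ₁, …, ϱ_{t_ε} < 1` then `t_ε ≤ ⌈1/(ε(2−ε))⌉`. -/
theorem stmt6 (ε : ℝ) (hε : ε ∈ Set.Ioo (0 : ℝ) 1) (r : ℕ → ℝ)
    (hr0 : r 0 = Real.sqrt ε) (hrs : ∀ t, r (t + 1) = Real.sqrt (ε + r t))
    (tε : ℕ) (htε : 1 < tε) (hlt : ∀ t < tε, r t < 1) :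
    tε ≤ ⌈1 / (ε * (2 - ε))⌉₊ := by
  obtain ⟨hε0, hε1⟩ := hε
  -- basic positivity facts
  have hrnn : ∀ t, 0 ≤ r t := by
    intro t
    cases t with
    | zero => rw [hr0]; exact Real.sqrt_nonneg _
    | succ n => rw [hrs]; exact Real.sqrt_nonneg _
  have hge : ∀ t, ε ≤ r t := by
    have hsq : ε ≤ Real.sqrt ε := by
      nlinarith [Real.sq_sqrt hε0.le, Real.sqrt_nonneg ε]
    intro t
    cases t with
    | zero => rw [hr0]; exact hsq
    | succ n =>
        rw [hrs]
        calc ε ≤ Real.sqrt ε := hsq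
        _ ≤ Real.sqrt (ε + r n) := Real.sqrt_le_sqrt (by linarith [hrnn n])
  have hsq' : ∀ t, (r (t+1))^2 = ε + r t := by
    intro t
    rw [hrs]
    exact Real.sq_sqrt (by linarith [hrnn t])
  have hsq0 : (r 0)^2 = ε := by rw [hr0]; exact Real.sq_sqrt hε0.le
  -- telescoping identity
  have key : ∀ n, r n = (∑ t ∈ Finset.range (n+1), (r t - (r t)^2)) + (n+1) * ε := by
    intro n
    induction n with
    | zero => simp [hsq0]
    | succ m ih =>
        rw [Finset.sum_range_succ]
        push_cast
        rw [hsq' m]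
        push_cast at ih
        linarith
  set n := tε - 1 with hn
  have hn1 : tε = n + 1 := by omega
  have hrn : r n < 1 := hlt n (by omega)
  -- r t ≤ 1 - ε for t ≤ n - 1
  have hub : ∀ t, t + 1 ≤ n → r t ≤ 1 - ε := by
    intro t ht
    have h1 : r (t+1) < 1 := hlt (t+1) (by omega)
    have h2 : (r (t+1))^2 < 1 := by nlinarith [hrnn (t+1)]
    rw [hsq' t] at h2
    linarith
  -- lower bound each term
  have hterm : ∀ t ∈ Finset.range (n+1), (if t + 1 ≤ n then ε * (1 - ε) else 0) ≤ r t - (r t)^2 := by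
    intro t ht
    by_cases h : t + 1 ≤ n
    · simp only [h, if_true]
      have h1 := hge t
      have h2 := hub t h
      nlinarith
    · simp only [h, if_false]
      have ht' : t = n := by simp at ht; omega
      subst ht'
      nlinarith [hrnn n]
  have hsum : (n : ℝ) * (ε * (1 - ε)) ≤ ∑ t ∈ Finset.range (n+1), (r t - (r t)^2) := by
    calc (n : ℝ) * (ε * (1 - ε))
        = ∑ t ∈ Finset.range (n+1), (if t + 1 ≤ n then ε * (1 - ε) else 0) := by
          rw [Finset.sum_range_succ]
          have hc : ∀ t ∈ Finset.range n, (if t + 1 ≤ n then ε * (1 - ε) else 0) = ε * (1 - ε) :=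
            fun t ht => if_pos (by simp at ht; omega)
          rw [Finset.sum_congr rfl hc, Finset.sum_const, if_neg (by omega)]
          simp [mul_comm]
      _ ≤ _ := Finset.sum_le_sum hterm
  have hkey := key n
  have hmain : (n : ℝ) * (ε * (2 - ε)) < 1 := by
    have : (n : ℝ) * ε ≤ ((n : ℝ) + 1) * ε := by nlinarith
    nlinarith
  have hpos : 0 < ε * (2 - ε) := by nlinarith
  have : (n : ℝ) < 1 / (ε * (2 - ε)) := by
    rw [lt_div_iff₀ hpos]; linarith
  have := Nat.lt_ceil.mpr this
  omega
end

section
/- Let (πₖ)ₖ be a sequence in [π_min, π_max] with π_min > 0 and πₖ₊₁ ≤ 1 + πₖ for all k. Let ρ₀ > 0 and suppose (ρₖ) satisfies ρₖ₊₁² ≥ (1 + πₖρₖ)/πₖ₊₁ − εₖ₊₁ for all k, where εₖ ≥ 0 and εₖ → 0. Then liminf_{k→∞} ρₖ > 1. -/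
open Filter Topology

/-!
Since `πₖ₊₁ ≤ 1 + πₖ`, the recursion gives `ρₖ₊₁² ≥ 1 + (ρₖ - 1) πₖ/(1 + πₖ) - εₖ₊₁`: the
excess of `ρ` over `1` is damped by at most the factor `π_min/(1 + π_min)` per step. On the
other hand, while `ρ` stays below `1 + η` for a small `η`, the potential `πₖρₖ` grows by at least
`1/4` per step, and it is bounded by `π_max(1 + η)`; so `ρ` exceeds `1 + η` within every window
of some fixed length `L`. Between two such times it can decay at most `L` times, which keeps it
above `1 + δ` with `δ = (π_min/(6(1 + π_min)))ᴸ η`.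
-/

lemma one_add_div_three_le_of_one_add_le_sq {x s : ℝ} (hs : 0 < s) (hx₀ : 0 ≤ x) (hx₃ : x ≤ 3)
    (h : 1 + x ≤ s ^ 2) : 1 + x / 3 ≤ s := by
  nlinarith

lemma one_add_sub_one_mul_le_div {a b r : ℝ} (ha : 0 ≤ a) (hb : 0 < b) (hab : b ≤ 1 + a)
    (hr : 0 ≤ r) : 1 + (r - 1) * (a / (1 + a)) ≤ (1 + a * r) / b := by
  calc 1 + (r - 1) * (a / (1 + a)) = (1 + a * r) / (1 + a) := by field_simp; ring
    _ ≤ (1 + a * r) / b := div_le_div_of_nonneg_left (by positivity) hb hab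

lemma div_one_add_le_div_one_add {a b : ℝ} (ha : 0 ≤ a) (hab : a ≤ b) :
    a / (1 + a) ≤ b / (1 + b) := by
  rw [div_le_div_iff₀ (by linarith) (by linarith)]
  nlinarith

lemma exists_not_of_bounded_of_add_le {Φ : ℕ → ℝ} {S : ℕ → Prop} {K L : ℕ} {c M : ℝ}
    (hΦ : ∀ k, 0 ≤ Φ k) (hM : ∀ k, S k → Φ k ≤ M) (hL : M < L * c)
    (hstep : ∀ k ≥ K, S k → S (k + 1) → Φ k + c ≤ Φ (k + 1)) :
    ∀ k ≥ K, ∃ j ≤ L, ¬ S (k + j) := by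
  intro k hk
  by_contra! hS
  have hgrow : ∀ j ≤ L, Φ k + j * c ≤ Φ (k + j) := by
    intro j hj
    induction j with
    | zero => simp
    | succ j ih =>
      have := hstep (k + j) (by omega) (hS j (by omega)) (hS (j + 1) hj)
      rw [← add_assoc]
      push_cast
      linarith [ih (by omega)]
  linarith [hgrow L le_rfl, hΦ k, hM _ (hS L le_rfl)]

lemma eventually_of_window {A B : ℕ → Prop} {L : ℕ}
    (hA : ∀ᶠ k in atTop, ∃ j ≤ L, A (k + j))
    (hAB : ∀ᶠ i in atTop, A i → ∀ m ≤ L, B (i + m)) :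
    ∀ᶠ k in atTop, B k := by
  obtain ⟨K, hK⟩ := (hA.and hAB).exists_forall_of_atTop
  filter_upwards [eventually_ge_atTop (K + L)] with k hk
  obtain ⟨j, hjL, hj⟩ := (hK (k - L) (by omega)).1
  have := (hK (k - L + j) (by omega)).2 hj (L - j) (by omega)
  rwa [show k - L + j + (L - j) = k by omega] at this

section Recursion

variable (π ρ ε : ℕ → ℝ)

lemma exists_window_one_add_le {P : ℝ} (hπ : ∀ k, π k ∈ Set.Ioc 0 P) (hρ : ∀ k, 0 < ρ k)
    (hε : Tendsto ε atTop (𝓝 0))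
    (hrec : ∀ k, (ρ (k + 1)) ^ 2 ≥ (1 + π k * ρ k) / π (k + 1) - ε (k + 1)) :
    ∃ L : ℕ, ∀ᶠ k in atTop, ∃ j ≤ L, 1 + 1 / (4 * P + 2) ≤ ρ (k + j) := by
  have hP : 0 < P := (hπ 0).1.trans_le (hπ 0).2
  set η := 1 / (4 * P + 2)
  have hη : 0 < η := by positivity
  have hηP : η * (2 * P + 1) = 1 / 2 := by simp only [η]; field_simp; ring
  obtain ⟨L, hL⟩ := exists_nat_gt (4 * (P * (1 + η)))
  obtain ⟨K, hK⟩ := (hε.eventually_lt_const (by positivity : (0 : ℝ) < 1 / (4 * P))).exists_forall_of_atTop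
  have hM : ∀ k, ρ k < 1 + η → π k * ρ k ≤ P * (1 + η) := fun k hk =>
    mul_le_mul (hπ k).2 hk.le (hρ k).le hP.le
  have hstep : ∀ k ≥ K, ρ k < 1 + η → ρ (k + 1) < 1 + η →
      π k * ρ k + 1 / 4 ≤ π (k + 1) * ρ (k + 1) := by
    intro k hk hρk hρk'
    obtain ⟨hπ₁, hπ₁P⟩ := hπ (k + 1)
    have hrec' : 1 + π k * ρ k - π (k + 1) * ε (k + 1) ≤ π (k + 1) * ρ (k + 1) ^ 2 := by
      have := hrec k
      rw [ge_iff_le, sub_le_iff_le_add, div_le_iff₀ hπ₁] at this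
      linarith
    have hπε : π (k + 1) * ε (k + 1) ≤ 1 / 4 := by
      have hεk := hK (k + 1) (by omega)
      rcases le_total 0 (ε (k + 1)) with h | h
      · calc π (k + 1) * ε (k + 1) ≤ P * (1 / (4 * P)) := mul_le_mul hπ₁P hεk.le h hP.le
          _ = 1 / 4 := by field_simp
      · nlinarith
    have hsq : π (k + 1) * ρ (k + 1) ^ 2 ≤ (1 + η) * (π (k + 1) * ρ (k + 1)) := by
      calc π (k + 1) * ρ (k + 1) ^ 2 = π (k + 1) * ρ (k + 1) * ρ (k + 1) := by ring
        _ ≤ π (k + 1) * ρ (k + 1) * (1 + η) :=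
          mul_le_mul_of_nonneg_left hρk'.le (mul_pos hπ₁ (hρ (k + 1))).le
        _ = (1 + η) * (π (k + 1) * ρ (k + 1)) := by ring
    have hΦ : η * (π k * ρ k + 1 / 4) ≤ 1 / 2 := by
      nlinarith [hM k hρk, (hπ k).1, hρ k]
    nlinarith
  refine ⟨L, eventually_atTop.2 ⟨K, fun k hk => ?_⟩⟩
  obtain ⟨j, hj, hρj⟩ := exists_not_of_bounded_of_add_le (S := fun k => ρ k < 1 + η) (L := L)
    (fun k => (mul_pos (hπ k).1 (hρ k)).le) hM (by linarith) hstep k hk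
  exact ⟨j, hj, not_lt.1 hρj⟩

lemma exists_eventually_one_add_le_of_one_add_le {p η : ℝ} (L : ℕ) (hp : 0 < p)
    (hπ : ∀ k, p ≤ π k) (hgrow : ∀ k, π (k + 1) ≤ 1 + π k) (hρ : ∀ k, 0 < ρ k)
    (hε : Tendsto ε atTop (𝓝 0))
    (hrec : ∀ k, (ρ (k + 1)) ^ 2 ≥ (1 + π k * ρ k) / π (k + 1) - ε (k + 1))
    (hη : 0 < η) (hη₁ : η ≤ 1) :
    ∃ δ > 0, ∀ᶠ i in atTop, 1 + η ≤ ρ i → ∀ m ≤ L, 1 + δ ≤ ρ (i + m) := by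
  set c := p / (1 + p)
  have hc : 0 < c := by positivity
  have hc₁ : c < 1 := (div_lt_one (by linarith)).2 (by linarith)
  have hq : 0 ≤ c / 6 := by positivity
  have hq₁ : c / 6 ≤ 1 := by linarith
  set δ := (c / 6) ^ L * η
  have hδ : 0 < δ := by positivity
  obtain ⟨K, hK⟩ := (hε.eventually_lt_const (by positivity : 0 < c * δ / 2)).exists_forall_of_atTop
  have hdecay : ∀ k ≥ K, ∀ d, δ ≤ d → d ≤ 1 → 1 + d ≤ ρ k → 1 + c / 6 * d ≤ ρ (k + 1) := by
    intro k hk d hδd hd₁ hρk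
    have hπk : 0 < π k := hp.trans_le (hπ k)
    have hdamp : d * c ≤ (ρ k - 1) * (π k / (1 + π k)) :=
      mul_le_mul (by linarith) (div_one_add_le_div_one_add hp.le (hπ k)) hc.le (by linarith)
    have hmean := one_add_sub_one_mul_le_div hπk.le (hp.trans_le (hπ (k + 1))) (hgrow k) (hρ k).le
    have hεk : ε (k + 1) < c * d / 2 := by
      nlinarith [hK (k + 1) (by omega)]
    have := one_add_div_three_le_of_one_add_le_sq (x := c * d / 2) (hρ (k + 1))
      (by nlinarith) (by nlinarith) (by linarith [hrec k])
    linarith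
  refine ⟨δ, hδ, eventually_atTop.2 ⟨K, fun i hi hρi m hm => ?_⟩⟩
  have hiter : ∀ m ≤ L, 1 + (c / 6) ^ m * η ≤ ρ (i + m) := by
    intro m hm
    induction m with
    | zero => simpa using hρi
    | succ m ih =>
      have hδm : δ ≤ (c / 6) ^ m * η :=
        mul_le_mul_of_nonneg_right (pow_le_pow_of_le_one hq hq₁ (by omega)) hη.le
      have hm₁ : (c / 6) ^ m * η ≤ 1 := by
        nlinarith [pow_le_one₀ hq hq₁ (n := m), pow_nonneg hq m]
      rw [pow_succ', mul_assoc]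
      exact hdecay (i + m) (by omega) _ hδm hm₁ (ih (by omega))
  calc 1 + δ ≤ 1 + (c / 6) ^ m * η := by
        gcongr 1 + ?_ * η
        exact pow_le_pow_of_le_one hq hq₁ hm
    _ ≤ ρ (i + m) := hiter m hm

end Recursion

theorem stmt9_general (π ρ ε : ℕ → ℝ) (πmin πmax : ℝ) (hπmin : 0 < πmin)
    (hπ : ∀ k, π k ∈ Set.Icc πmin πmax) (hπgrow : ∀ k, π (k + 1) ≤ 1 + π k)
    (hρpos : ∀ k, 0 < ρ k)
    (hεlim : Tendsto ε atTop (𝓝 0))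
    (hrec : ∀ k, (ρ (k + 1)) ^ 2 ≥ (1 + π k * ρ k) / π (k + 1) - ε (k + 1)) :
    ∃ δ > 0, ∀ᶠ k in atTop, 1 + δ ≤ ρ k := by
  have hπ' : ∀ k, π k ∈ Set.Ioc 0 πmax := fun k => ⟨hπmin.trans_le (hπ k).1, (hπ k).2⟩
  have hπmax : 0 < πmax := (hπ' 0).1.trans_le (hπ' 0).2
  obtain ⟨L, hwindow⟩ := exists_window_one_add_le π ρ ε hπ' hρpos hεlim hrec
  obtain ⟨δ, hδ, hpersist⟩ := exists_eventually_one_add_le_of_one_add_le π ρ ε (η := 1 / (4 * πmax + 2)) L hπmin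
    (fun k => (hπ k).1) hπgrow hρpos hεlim hrec (by positivity)
    ((div_le_one (by positivity)).2 (by linarith))
  exact ⟨δ, hδ, eventually_of_window hwindow hpersist⟩

/-- If `(πₖ) ⊂ [π_min, π_max]` with `π_min > 0` and `πₖ₊₁ ≤ 1 + πₖ`, and a positive sequence
`(ρₖ)` satisfies `ρₖ₊₁² ≥ (1 + πₖρₖ)/πₖ₊₁ − εₖ₊₁` with `εₖ ≥ 0`, `εₖ → 0`, then
`liminf ρₖ > 1`, i.e. eventually `ρₖ ≥ 1 + δ` for some `δ > 0`. -/
theorem stmt9 (π ρ ε : ℕ → ℝ) (πmin πmax : ℝ) (hπmin : 0 < πmin)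
    (hπ : ∀ k, π k ∈ Set.Icc πmin πmax) (hπgrow : ∀ k, π (k + 1) ≤ 1 + π k)
    (hρpos : ∀ k, 0 < ρ k)
    (hε : ∀ k, 0 ≤ ε k) (hεlim : Tendsto ε atTop (𝓝 0))
    (hrec : ∀ k, (ρ (k + 1)) ^ 2 ≥ (1 + π k * ρ k) / π (k + 1) - ε (k + 1)) :
    ∃ δ > 0, ∀ᶠ k in atTop, 1 + δ ≤ ρ k :=
  stmt9_general π ρ ε πmin πmax hπmin hπ hπgrow hρpos hεlim hrec
end

section
/- Let φ = f + g with f : ℝⁿ → ℝ continuously differentiable and g : ℝⁿ → ℝ ∪ {∞} proper, lsc, convex. Suppose xᵏ → x⋆ ∈ argmin φ, that φ(xᵏ) → min φ, and let x̄ᵏ = prox_{γₖ g}(xᵏ − γₖ∇f(xᵏ)) with (γₖ) ⊂ ℝ₊₊ bounded and bounded away from zero. Then φ(x̄ᵏ) → min φ. -/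
open scoped RealInnerProductSpace
open Filter Topology

noncomputable section

/-!
Write `a = g x⋆` and `bₖ = g x̄ₖ`; both are finite, by properness and by the prox inequality.
Fermat's rule at the minimizer `x⋆` gives `a ≤ bₖ + ⟪∇f x⋆, x̄ₖ - x⋆⟫`, and comparing the prox
objective at `x̄ₖ` with its value at `x⋆` gives
`‖x̄ₖ - x⋆‖² ≤ 2γₖ (a - bₖ - ⟪x̄ₖ - x⋆, sₖ⟫)` with `sₖ = ∇f xₖ - γₖ⁻¹ (xₖ - x⋆) → ∇f x⋆`.
Adding the two, `‖x̄ₖ - x⋆‖ ≤ 2γₖ ‖∇f x⋆ - sₖ‖ → 0`, and then both inequalities squeeze `bₖ → a`;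
continuity of `f` does the rest.
-/

section InnerProductSpace

variable {E : Type*} [NormedAddCommGroup E] [InnerProductSpace ℝ E]

lemma norm_le_mul_norm_of_sq_le_mul_inner {u v : E} {c : ℝ} (hc : 0 ≤ c)
    (h : ‖u‖ ^ 2 ≤ c * ⟪v, u⟫) : ‖u‖ ≤ c * ‖v‖ := by
  rcases (norm_nonneg u).eq_or_lt with hu | hu
  · rw [← hu]; positivity
  · have : ‖u‖ * ‖u‖ ≤ c * ‖v‖ * ‖u‖ :=
      calc ‖u‖ * ‖u‖ = ‖u‖ ^ 2 := (sq _).symm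
        _ ≤ c * ⟪v, u⟫ := h
        _ ≤ c * ‖v‖ * ‖u‖ := by
          rw [mul_assoc]; exact mul_le_mul_of_nonneg_left (real_inner_le_norm v u) hc
    exact le_of_mul_le_mul_right this hu

lemma norm_sub_sq_le_of_prox_ineq {γ a b : ℝ} {y p z : E} (hγ : 0 < γ)
    (h : b + 1 / (2 * γ) * ‖p - y‖ ^ 2 ≤ a + 1 / (2 * γ) * ‖z - y‖ ^ 2) :
    ‖p - z‖ ^ 2 ≤ 2 * γ * (a - b - ⟪p - z, γ⁻¹ • (z - y)⟫) := by
  have hsplit : p - y = (p - z) + (z - y) := by abel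
  rw [hsplit, norm_add_sq_real] at h
  rw [real_inner_smul_right]
  field_simp at h ⊢
  linarith

lemma norm_le_of_prox_ineq_of_le_add_inner {γ a b : ℝ} {d s u : E} (hγ : 0 < γ)
    (hprox : ‖u‖ ^ 2 ≤ 2 * γ * (a - b - ⟪u, s⟫)) (hsub : a ≤ b + ⟪d, u⟫) :
    ‖u‖ ≤ 2 * γ * ‖d - s‖ := by
  refine norm_le_mul_norm_of_sq_le_mul_inner (by positivity) (hprox.trans ?_)
  rw [inner_sub_left, real_inner_comm s]
  gcongr
  linarith

variable {ι : Type*} {l : Filter ι}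

lemma tendsto_inv_smul_forward_step {F : E → E} {x : ι → E} {γ : ι → ℝ} {x₀ : E} {γmin : ℝ}
    (hF : ContinuousAt F x₀) (hx : Tendsto x l (𝓝 x₀)) (hγmin : 0 < γmin)
    (hγ : ∀ i, γmin ≤ γ i) :
    Tendsto (fun i ↦ (γ i)⁻¹ • (x₀ - (x i - γ i • F (x i)))) l (𝓝 (F x₀)) := by
  have hγpos i : 0 < γ i := hγmin.trans_le (hγ i)
  have hrw i :
      (γ i)⁻¹ • (x₀ - (x i - γ i • F (x i))) = F (x i) - (γ i)⁻¹ • (x i - x₀) := by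
    simp only [smul_sub, inv_smul_smul₀ (hγpos i).ne']; abel
  have hinv : IsBoundedUnder (· ≤ ·) l (norm ∘ fun i ↦ (γ i)⁻¹) :=
    isBoundedUnder_of ⟨γmin⁻¹, fun i ↦ by
      simp only [Function.comp, norm_inv, Real.norm_of_nonneg (hγpos i).le]
      exact inv_anti₀ hγmin (hγ i)⟩
  rw [tendsto_congr hrw]
  simpa using
    (hF.tendsto.comp hx).sub (hinv.smul_tendsto_zero (tendsto_sub_nhds_zero_iff.2 hx))

variable {γ b : ι → ℝ} {u s : ι → E} {a : ℝ} {d : E}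

lemma tendsto_zero_of_prox_ineq_of_le_add_inner {γmax : ℝ} (hs : Tendsto s l (𝓝 d))
    (hγ : ∀ i, 0 < γ i) (hγmax : ∀ i, γ i ≤ γmax)
    (hprox : ∀ i, ‖u i‖ ^ 2 ≤ 2 * γ i * (a - b i - ⟪u i, s i⟫))
    (hsub : ∀ i, a ≤ b i + ⟪d, u i⟫) : Tendsto u l (𝓝 0) := by
  refine squeeze_zero_norm (fun i ↦ ?_)
    (by simpa using (tendsto_iff_norm_sub_tendsto_zero.1 hs).const_mul (2 * γmax))
  calc ‖u i‖ ≤ 2 * γ i * ‖d - s i‖ :=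
        norm_le_of_prox_ineq_of_le_add_inner (hγ i) (hprox i) (hsub i)
    _ ≤ 2 * γmax * ‖s i - d‖ := by
        rw [norm_sub_rev]; gcongr; exact hγmax i

lemma tendsto_of_prox_ineq_of_le_add_inner (hu : Tendsto u l (𝓝 0)) (hs : Tendsto s l (𝓝 d))
    (hγ : ∀ i, 0 < γ i) (hprox : ∀ i, ‖u i‖ ^ 2 ≤ 2 * γ i * (a - b i - ⟪u i, s i⟫))
    (hsub : ∀ i, a ≤ b i + ⟪d, u i⟫) : Tendsto b l (𝓝 a) := by
  refine tendsto_of_tendsto_of_tendsto_of_le_of_le (g := fun i ↦ a - ⟪d, u i⟫)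
    (h := fun i ↦ a - ⟪u i, s i⟫) ?_ ?_ (fun i ↦ by linarith [hsub i]) (fun i ↦ ?_)
  · simpa using tendsto_const_nhds.sub ((tendsto_const_nhds (x := d)).inner (𝕜 := ℝ) hu)
  · simpa using (tendsto_const_nhds (x := a)).sub (hu.inner (𝕜 := ℝ) hs)
  · nlinarith [hprox i, hγ i, sq_nonneg ‖u i‖]

end InnerProductSpace

lemma ContDiff.continuous_gradient {F : Type*} [NormedAddCommGroup F] [InnerProductSpace ℝ F]
    [CompleteSpace F] {f : F → ℝ} (hf : ContDiff ℝ 1 f) : Continuous (gradient f) :=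
  (InnerProductSpace.toDual ℝ F).symm.continuous.comp (hf.continuous_fderiv one_ne_zero)

lemma HasLineDerivAt.le_of_forall_mul_le {F : Type*} [NormedAddCommGroup F] [NormedSpace ℝ F]
    {f : F → ℝ} {f' c : ℝ} {x v : F} (hf : HasLineDerivAt ℝ f f' x v)
    (h : ∀ t ∈ Set.Ioc (0 : ℝ) 1, t * c ≤ f (x + t • v) - f x) : c ≤ f' := by
  refine ge_of_tendsto hf.tendsto_slope_zero_right ?_
  filter_upwards [Ioc_mem_nhdsGT one_pos] with t ht
  rw [smul_eq_mul, le_inv_mul_iff₀ ht.1]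
  exact h t ht

section EReal

variable {n : ℕ} {g : EuclideanSpace ℝ (Fin n) → EReal}

lemma EProper.exists_eq_coe_of_minimizer (hg : EProper g) (f : EuclideanSpace ℝ (Fin n) → ℝ)
    {x : EuclideanSpace ℝ (Fin n)} (hmin : ∀ z, (f x : EReal) + g x ≤ f z + g z) :
    ∃ a : ℝ, g x = a := by
  obtain ⟨hbot, z, hz⟩ := hg
  refine ⟨(g x).toReal, (EReal.coe_toReal ?_ (hbot x)).symm⟩
  intro htop
  have := hmin z
  rw [htop, EReal.add_top_of_ne_bot (EReal.coe_ne_bot _), top_le_iff,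
    ← EReal.coe_toReal hz (hbot z), ← EReal.coe_add] at this
  exact EReal.coe_ne_top _ this

lemma IsProx.exists_eq_coe_s11 {γ : ℝ} {y p z : EuclideanSpace ℝ (Fin n)} (h : IsProx g γ y p)
    (hp : g p ≠ ⊥) {a : ℝ} (hz : g z = a) :
    ∃ b : ℝ, g p = b ∧ b + 1 / (2 * γ) * ‖p - y‖ ^ 2 ≤ a + 1 / (2 * γ) * ‖z - y‖ ^ 2 := by
  have hle := h z
  have hp_top : g p ≠ ⊤ := by
    intro htop
    rw [htop, EReal.top_add_coe, hz, ← EReal.coe_add, top_le_iff] at hle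
    exact EReal.coe_ne_top _ hle
  refine ⟨(g p).toReal, (EReal.coe_toReal hp_top hp).symm, ?_⟩
  rwa [← EReal.coe_toReal hp_top hp, hz, ← EReal.coe_add, ← EReal.coe_add,
    EReal.coe_le_coe_iff] at hle

/-- Fermat's rule for `f + g`: `-∇f x` is a subgradient of `g` at a minimizer `x`. -/
lemma EConvexOn.le_add_inner_gradient (hg : EConvexOn g) {f : EuclideanSpace ℝ (Fin n) → ℝ}
    {x z : EuclideanSpace ℝ (Fin n)} (hf : DifferentiableAt ℝ f x)
    (hmin : ∀ z, (f x : EReal) + g x ≤ f z + g z) {a b : ℝ} (hx : g x = a) (hz : g z = b) :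
    a ≤ b + ⟪gradient f x, z - x⟫ := by
  have hline : HasLineDerivAt ℝ f ⟪gradient f x, z - x⟫ x (z - x) := by
    rw [inner_gradient_left]; exact hf.hasFDerivAt.hasLineDerivAt _
  suffices ∀ t ∈ Set.Ioc (0 : ℝ) 1, t * (a - b) ≤ f (x + t • (z - x)) - f x by
    linarith [hline.le_of_forall_mul_le this]
  intro t ⟨ht0, ht1⟩
  have hseg : t • z + (1 - t) • x = x + t • (z - x) := by module
  have hconv : g (x + t • (z - x)) ≤ ((t * b + (1 - t) * a : ℝ) : EReal) := by
    have := hg z x t (1 - t) ht0.le (by linarith) (by ring)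
    rwa [hseg, hz, hx, ← EReal.coe_mul, ← EReal.coe_mul, ← EReal.coe_add] at this
  have hle : (f x : EReal) + a ≤ f (x + t • (z - x)) + ((t * b + (1 - t) * a : ℝ) : EReal) :=
    hx ▸ (hmin _).trans (add_le_add_right hconv _)
  rw [← EReal.coe_add, ← EReal.coe_add, EReal.coe_le_coe_iff] at hle
  linarith

end EReal

theorem stmt11_general {n : ℕ} (f : EuclideanSpace ℝ (Fin n) → ℝ) (hf : ContDiff ℝ 1 f)
    (g : EuclideanSpace ℝ (Fin n) → EReal)
    (hgp : EProper g) (hgc : EConvexOn g)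
    (φ : EuclideanSpace ℝ (Fin n) → EReal)
    (hφ : φ = fun z => (f z : EReal) + g z)
    (x xbar : ℕ → EuclideanSpace ℝ (Fin n)) (xstar : EuclideanSpace ℝ (Fin n))
    (hmin : ∀ z, φ xstar ≤ φ z)
    (hx : Tendsto x atTop (𝓝 xstar))
    (γ : ℕ → ℝ) (γmin γmax : ℝ) (hγmin : 0 < γmin)
    (hγ : ∀ k, γ k ∈ Set.Icc γmin γmax)
    (hprox : ∀ k, IsProx g (γ k) (x k - γ k • gradient f (x k)) (xbar k)) :
    Tendsto (fun k => φ (xbar k)) atTop (𝓝 (φ xstar)) := by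
  subst hφ
  have hγpos k : 0 < γ k := hγmin.trans_le (hγ k).1
  obtain ⟨a, ha⟩ := hgp.exists_eq_coe_of_minimizer f hmin
  choose b hb hprox_real using fun k ↦ (hprox k).exists_eq_coe_s11 (hgp.1 _) ha
  have hs := tendsto_inv_smul_forward_step hf.continuous_gradient.continuousAt hx hγmin
    (fun k ↦ (hγ k).1)
  have hprox_sq k := norm_sub_sq_le_of_prox_ineq (hγpos k) (hprox_real k)
  have hsub k := hgc.le_add_inner_gradient (hf.differentiable one_ne_zero xstar) hmin ha (hb k)
  have hxbar :=
    tendsto_zero_of_prox_ineq_of_le_add_inner hs hγpos (fun k ↦ (hγ k).2) hprox_sq hsub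
  have hbtends := tendsto_of_prox_ineq_of_le_add_inner hxbar hs hγpos hprox_sq hsub
  simp only [hb, ha, ← EReal.coe_add]
  exact (continuous_coe_real_ereal.tendsto _).comp
    (((hf.continuous.tendsto xstar).comp (tendsto_sub_nhds_zero_iff.1 hxbar)).add hbtends)

/-- If `xᵏ → x⋆ ∈ argmin (f + g)` and `x̄ᵏ = prox_{γₖ g}(xᵏ − γₖ∇f(xᵏ))` with stepsizes
bounded and bounded away from zero, then `x̄ᵏ → x⋆`. -/
theorem stmt11 {n : ℕ} (f : EuclideanSpace ℝ (Fin n) → ℝ) (hf : ContDiff ℝ 1 f)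
    (g : EuclideanSpace ℝ (Fin n) → EReal)
    (hgp : EProper g) (hglsc : LowerSemicontinuous g) (hgc : EConvexOn g)
    (φ : EuclideanSpace ℝ (Fin n) → EReal)
    (hφ : φ = fun z => (f z : EReal) + g z)
    (x xbar : ℕ → EuclideanSpace ℝ (Fin n)) (xstar : EuclideanSpace ℝ (Fin n))
    (hmin : ∀ z, φ xstar ≤ φ z)
    (hx : Tendsto x atTop (𝓝 xstar))
    (γ : ℕ → ℝ) (γmin γmax : ℝ) (hγmin : 0 < γmin)
    (hγ : ∀ k, γ k ∈ Set.Icc γmin γmax)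
    (hprox : ∀ k, IsProx g (γ k) (x k - γ k • gradient f (x k)) (xbar k))
    (hφx : Tendsto (fun k => φ (x k)) atTop (𝓝 (φ xstar))) :
    Tendsto (fun k => φ (xbar k)) atTop (𝓝 (φ xstar)) :=
  stmt11_general f hf g hgp hgc φ hφ x xbar xstar hmin hx γ γmin γmax hγmin hγ hprox
end
end

section
/- Let ε ∈ (0, 1), define ϱ₁ = √ε and ϱ_{t+1} = √(ε + ϱ_t), let t_ε = max{t : ϱ₁,…,ϱ_t < 1} and m(ε) = ∏_{t=1}^{t_ε} ϱ_t. Suppose a positive sequence (γₖ) satisfies: γ_K ≥ c for some index K and constant c > 0, and for all k ≥ K, whenever γₖ < c the update satisfies γₖ₊₁/γₖ ≥ √(ε + γₖ/γₖ₋₁), while γ_{K+1}/γ_K ≥ √ε. Then γₖ ≥ m(ε)·c for all k ≥ K. -/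
/-- Stepsize-recovery lemma: with the reference sequence `ϱ₁ = √ε`, `ϱ_{t+1} = √(ε + ϱ_t)`
(indexed here from `0`, so `ϱ_{t+1} = r t`), `t_ε = max{t : ϱ₁, …, ϱ_t < 1}` and
`m(ε) = ∏_{t=1}^{t_ε} ϱ_t`, if a positive stepsize sequence satisfies `γ_K ≥ c`, the drop
into the region below `c` loses at most a factor `√ε` (resp. follows the recursion
`γₖ₊₁ ≥ γₖ√(ε + γₖ/γₖ₋₁)` whenever the new stepsize `γₖ₊₁` is below `c`), then
`γₖ ≥ m(ε)·c` for all `k ≥ K`. -/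
theorem stmt19 (ε : ℝ) (hε : ε ∈ Set.Ioo (0 : ℝ) 1)
    (r : ℕ → ℝ) (hr0 : r 0 = Real.sqrt ε) (hrs : ∀ t, r (t + 1) = Real.sqrt (ε + r t))
    (tε : ℕ) (hlt : ∀ t < tε, r t < 1) (hge : 1 ≤ r tε)
    (γ : ℕ → ℝ) (hγpos : ∀ k, 0 < γ k)
    (K : ℕ) (c : ℝ) (hc : 0 < c) (hγK : c ≤ γ K)
    (hdrop : γ (K + 1) < c → Real.sqrt ε * γ K ≤ γ (K + 1))
    (hrec : ∀ k, K ≤ k → γ (k + 2) < c →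
      γ (k + 1) * Real.sqrt (ε + γ (k + 1) / γ k) ≤ γ (k + 2)) :
    ∀ k, K ≤ k → (∏ t ∈ Finset.range tε, r t) * c ≤ γ k := by
  obtain ⟨hε0, hε1⟩ := hε
  set P : ℕ → ℝ := fun j => ∏ t ∈ Finset.range j, r t with hP
  have hr_nonneg : ∀ t, 0 ≤ r t := by
    intro t
    cases t with
    | zero => rw [hr0]; exact Real.sqrt_nonneg _
    | succ n => rw [hrs]; exact Real.sqrt_nonneg _
  have hr_ge1 : ∀ t, tε ≤ t → 1 ≤ r t := by
    intro t ht
    induction t, ht using Nat.le_induction with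
    | base => exact hge
    | succ n hn ih =>
      rw [hrs]
      have h1 : (1:ℝ) ≤ ε + r n := by linarith
      calc (1:ℝ) = Real.sqrt 1 := Real.sqrt_one.symm
        _ ≤ _ := Real.sqrt_le_sqrt h1
  have hPnonneg : ∀ j, 0 ≤ P j := fun j => Finset.prod_nonneg (fun t _ => hr_nonneg t)
  have hPsucc : ∀ j, P (j+1) = P j * r j := fun j => Finset.prod_range_succ _ _
  have hPdec : ∀ n j, j + n ≤ tε → P (j + n) ≤ P j := by
    intro n
    induction n with
    | zero => intro j _; simp
    | succ n ih =>
      intro j hj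
      have h1 : P (j + n + 1) ≤ P (j + n) := by
        rw [hPsucc]
        exact mul_le_of_le_one_right (hPnonneg _) (le_of_lt (hlt _ (by omega)))
      have h2 := ih j (by omega)
      calc P (j + (n+1)) = P (j + n + 1) := by ring_nf
        _ ≤ P (j + n) := h1
        _ ≤ P j := h2
  have hPmin : ∀ j, P tε ≤ P j := by
    intro j
    rcases le_or_gt j tε with h | h
    · have h2 := hPdec (tε - j) j (by omega)
      rwa [show j + (tε - j) = tε by omega] at h2
    · have h3 : ∀ t, tε ≤ t → P tε ≤ P t := by
        intro t ht
        induction t, ht using Nat.le_induction with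
        | base => exact le_refl _
        | succ n hn ih =>
          rw [hPsucc]
          exact le_trans ih (le_mul_of_one_le_right (hPnonneg n) (hr_ge1 n hn))
      exact h3 j h.le
  have main : ∀ k, K ≤ k →
      c ≤ γ k ∨ (K < k ∧ ∃ i, r i * γ (k - 1) ≤ γ k ∧ c * P (i+1) ≤ γ k) := by
    intro k hk
    induction k, hk using Nat.le_induction with
    | base => exact Or.inl hγK
    | succ k hk ih =>
      rcases lt_or_ge (γ (k+1)) c with hlt' | hge'
      · right
        refine ⟨by omega, ?_⟩
        rcases ih with hck | ⟨hKk, i, h1, h2⟩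
        · have hstep : Real.sqrt ε * γ k ≤ γ (k+1) := by
            rcases Nat.eq_or_lt_of_le hk with heq | hKlt
            · subst heq; exact hdrop hlt'
            · obtain ⟨m, rfl⟩ := Nat.exists_eq_add_of_lt hKlt
              have hm : K ≤ K + m := Nat.le_add_right _ _
              have hr' := hrec (K + m) hm hlt'
              have hdpos : 0 < γ (K + m + 1) / γ (K + m) :=
                div_pos (hγpos _) (hγpos _)
              have hd : Real.sqrt ε ≤ Real.sqrt (ε + γ (K + m + 1) / γ (K + m)) :=
                Real.sqrt_le_sqrt (by linarith)
              calc Real.sqrt ε * γ (K + m + 1)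
                  ≤ Real.sqrt (ε + γ (K + m + 1) / γ (K + m)) * γ (K + m + 1) :=
                    mul_le_mul_of_nonneg_right hd (hγpos _).le
                _ = γ (K + m + 1) * Real.sqrt (ε + γ (K + m + 1) / γ (K + m)) :=
                    mul_comm _ _
                _ ≤ γ (K + m + 2) := hr'
          refine ⟨0, ?_, ?_⟩
          · simpa [hr0] using hstep
          · calc c * P (0+1) = c * r 0 := by simp [hPsucc, hP]
              _ ≤ γ k * r 0 := mul_le_mul_of_nonneg_right hck (hr_nonneg 0)
              _ = r 0 * γ k := mul_comm _ _
              _ = Real.sqrt ε * γ k := by rw [hr0]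
              _ ≤ γ (k+1) := hstep
        · obtain ⟨m, rfl⟩ := Nat.exists_eq_add_of_lt hKk
          have hm : K ≤ K + m := Nat.le_add_right _ _
          have hr' := hrec (K + m) hm hlt'
          have h1' : r i * γ (K + m) ≤ γ (K + m + 1) := by simpa using h1
          have hratio : r i ≤ γ (K + m + 1) / γ (K + m) :=
            (le_div_iff₀ (hγpos (K + m))).2 h1'
          have hd : r (i+1) ≤ Real.sqrt (ε + γ (K + m + 1) / γ (K + m)) := by
            rw [hrs]; exact Real.sqrt_le_sqrt (by linarith)
          have key : r (i+1) * γ (K + m + 1) ≤ γ (K + m + 2) := by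
            calc r (i+1) * γ (K + m + 1)
                ≤ Real.sqrt (ε + γ (K + m + 1) / γ (K + m)) * γ (K + m + 1) :=
                  mul_le_mul_of_nonneg_right hd (hγpos _).le
              _ = γ (K + m + 1) * Real.sqrt (ε + γ (K + m + 1) / γ (K + m)) :=
                  mul_comm _ _
              _ ≤ γ (K + m + 2) := hr'
          refine ⟨i+1, ?_, ?_⟩
          · simpa using key
          · calc c * P (i+1+1) = c * P (i+1) * r (i+1) := by rw [hPsucc]; ring
              _ ≤ γ (K + m + 1) * r (i+1) :=
                  mul_le_mul_of_nonneg_right h2 (hr_nonneg _)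
              _ = r (i+1) * γ (K + m + 1) := mul_comm _ _
              _ ≤ γ (K + m + 2) := key
      · exact Or.inl hge'
  intro k hk
  rcases main k hk with h | ⟨_, i, _, h2⟩
  · have hle1 : P tε ≤ 1 :=
      Finset.prod_le_one (fun t _ => hr_nonneg t)
        (fun t ht => (hlt t (Finset.mem_range.1 ht)).le)
    calc P tε * c ≤ 1 * c := mul_le_mul_of_nonneg_right hle1 hc.le
      _ = c := one_mul c
      _ ≤ γ k := h
  · calc P tε * c = c * P tε := mul_comm _ _
      _ ≤ c * P (i+1) := mul_le_mul_of_nonneg_left (hPmin (i+1)) hc.le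
      _ ≤ γ k := h2
end
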